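/- Set ξ := t·x·α·t. Then the elements α·t and t·β intertwine the transferred differential D + ξ with the perturbed differential D + x and are mutually inverse comparison maps: (D + x)·(α·t) = (α·t)·(D + ξ), (t·β)·(D + x) = (D + ξ)·(t·β), (t·β)·(α·t) = t, and (α·t)·(t·β) = α·t·β. -/

import Mathlib

/-!
The homotopy relation `D s + s D = 1 - t` and the Maurer–Cartan equation combine into the
intertwining relations `(1 + s x)(D + x) = D (1 + s x) + t x` and
`(D + x)(1 + x s) = (1 + x s) D + x t`. Conjugating by the inverses `α` and `β` gives
`(D + x) α = α D + α t x α` and `β (D + x) = D β + β x t β`; cutting down by the idempotent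
`t` (which commutes with `D`) and the push-through identity `β x = x α` turn these into the
intertwining of `D + x` with `D + ξ`. Finally `t α = t` and `s α = s`, because `t s = 0` and
`s s = 0`, which gives `t β α t = t`.
-/

section Inverse

variable {R : Type*} [Ring R]

theorem IsUnit.one_add_mul_comm {a b : R} (h : IsUnit (1 + a * b)) : IsUnit (1 + b * a) := by
  refine ⟨⟨1 + b * a, 1 - b * Ring.inverse (1 + a * b) * a, ?_, ?_⟩, rfl⟩
  · calc (1 + b * a) * (1 - b * Ring.inverse (1 + a * b) * a)
        = 1 + b * a - b * ((1 + a * b) * Ring.inverse (1 + a * b)) * a := by noncomm_ring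
      _ = 1 := by rw [Ring.mul_inverse_cancel _ h]; noncomm_ring
  · calc (1 - b * Ring.inverse (1 + a * b) * a) * (1 + b * a)
        = 1 + b * a - b * (Ring.inverse (1 + a * b) * (1 + a * b)) * a := by noncomm_ring
      _ = 1 := by rw [Ring.inverse_mul_cancel _ h]; noncomm_ring

theorem Ring.inverse_mul_eq_mul_inverse_of_mul_eq_mul {u v b : R} (hu : IsUnit u)
    (hv : IsUnit v) (h : u * b = b * v) : Ring.inverse u * b = b * Ring.inverse v :=
  calc Ring.inverse u * b = Ring.inverse u * (b * v) * Ring.inverse v := by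
        rw [mul_assoc, mul_assoc, Ring.mul_inverse_cancel _ hv, mul_one]
    _ = b * Ring.inverse v := by
        rw [← h, ← mul_assoc, Ring.inverse_mul_cancel _ hu, one_mul]

theorem Ring.inverse_one_add_mul_mul {a b : R} (h : IsUnit (1 + a * b)) :
    Ring.inverse (1 + b * a) * b = b * Ring.inverse (1 + a * b) :=
  Ring.inverse_mul_eq_mul_inverse_of_mul_eq_mul h.one_add_mul_comm h (by noncomm_ring)

theorem Ring.mul_inverse_eq_self {u t : R} (hu : IsUnit u) (h : t * u = t) :
    t * Ring.inverse u = t := by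
  conv_lhs => rw [← h]
  rw [mul_assoc, Ring.mul_inverse_cancel _ hu, mul_one]

theorem Ring.mul_inverse_eq_of_mul_eq_mul_add {u A B c : R} (hu : IsUnit u)
    (h : u * A = B * u + c) :
    A * Ring.inverse u = Ring.inverse u * B + Ring.inverse u * c * Ring.inverse u :=
  calc A * Ring.inverse u = Ring.inverse u * (u * A) * Ring.inverse u := by
        rw [← mul_assoc, Ring.inverse_mul_cancel _ hu, one_mul]
    _ = Ring.inverse u * B * (u * Ring.inverse u) + Ring.inverse u * c * Ring.inverse u := by
        rw [h]; noncomm_ring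
    _ = _ := by rw [Ring.mul_inverse_cancel _ hu, mul_one]

theorem Ring.inverse_mul_eq_of_mul_eq_mul_add {u A B c : R} (hu : IsUnit u)
    (h : A * u = u * B + c) :
    Ring.inverse u * A = B * Ring.inverse u + Ring.inverse u * c * Ring.inverse u :=
  calc Ring.inverse u * A = Ring.inverse u * (A * u) * Ring.inverse u := by
        rw [mul_assoc, mul_assoc, Ring.mul_inverse_cancel _ hu, mul_one]
    _ = Ring.inverse u * u * B * Ring.inverse u + Ring.inverse u * c * Ring.inverse u := by
        rw [h]; noncomm_ring
    _ = _ := by rw [Ring.inverse_mul_cancel _ hu, one_mul]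

end Inverse

section Perturbation

variable {R : Type*} [Ring R] {s t x D : R}

theorem one_add_mul_mul_add_eq (hDD : D * D = 0) (hDs : D * s + s * D = 1 - t)
    (hMC : (D + x) * (D + x) = 0) :
    (1 + s * x) * (D + x) = D * (1 + s * x) + t * x := by
  linear_combination (norm := noncomm_ring) s * hMC - s * hDD - hDs * x

theorem add_mul_one_add_mul_eq (hDD : D * D = 0) (hDs : D * s + s * D = 1 - t)
    (hMC : (D + x) * (D + x) = 0) :
    (D + x) * (1 + x * s) = (1 + x * s) * D + x * t := by
  linear_combination (norm := noncomm_ring) hMC * s - hDD * s - x * hDs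

end Perturbation

/-- The elements `αt` and `tβ` intertwine the transferred differential `D + ξ` with
the perturbed differential `D + x` and are mutually inverse comparison maps. -/
theorem comparison_maps {R : Type*} [Ring R] (s t x D : R)
    (hss : s * s = 0) (hst : s * t = 0) (hts : t * s = 0) (htt : t * t = t)
    (hu : IsUnit (1 + s * x))
    (hDD : D * D = 0) (hDs : D * s + s * D = 1 - t) (hDt : D * t = t * D)
    (hMC : (D + x) * (D + x) = 0) :
    let α := Ring.inverse (1 + s * x)
    let β := Ring.inverse (1 + x * s)
    let ξ := t * x * α * t
    (D + x) * (α * t) = (α * t) * (D + ξ) ∧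
      (t * β) * (D + x) = (D + ξ) * (t * β) ∧
      (t * β) * (α * t) = t ∧
      (α * t) * (t * β) = α * t * β := by
  intro α β ξ
  simp only [ξ]
  have hDxα : (D + x) * α = α * D + α * (t * x) * α :=
    Ring.mul_inverse_eq_of_mul_eq_mul_add hu (one_add_mul_mul_add_eq hDD hDs hMC)
  have hβDx : β * (D + x) = D * β + β * (x * t) * β :=
    Ring.inverse_mul_eq_of_mul_eq_mul_add hu.one_add_mul_comm
      (add_mul_one_add_mul_eq hDD hDs hMC)
  have hβx : β * x = x * α := Ring.inverse_one_add_mul_mul hu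
  have htα : t * α = t := Ring.mul_inverse_eq_self hu (by rw [mul_add, ← mul_assoc, hts]; simp)
  have hsα : s * α = s := Ring.mul_inverse_eq_self hu (by rw [mul_add, ← mul_assoc, hss]; simp)
  have hβ : β * (1 + x * s) = 1 := Ring.inverse_mul_cancel _ hu.one_add_mul_comm
  refine ⟨?_, ?_, ?_, ?_⟩
  · linear_combination (norm := noncomm_ring) hDxα * t + α * hDt - α * htt * x * α * t
  · linear_combination (norm := noncomm_ring)
      t * hβDx - hDt * β + t * hβx * t * β - t * x * α * htt * β
  · linear_combination (norm := noncomm_ring)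
      t * hβ * α * t - t * β * x * hsα * t - t * β * x * hst + htα * t + htt
  · simp only [mul_assoc, ← mul_assoc t t β, htt]
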